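/- For two Gaussian densities p_0(y) = (2πσ²)^{−n/2}exp(−‖y−μ_0‖²/(2σ²)) and p_1(y) = (2πσ²)^{−n/2}exp(−‖y−μ_1‖²/(2σ²)) on ℝ^n, ∫_{ℝ^n} min{p_0(y), p_1(y)} dy = 2·Q(‖μ_1 − μ_0‖/(2σ)), where Q(s) = (2π)^{−1/2}∫_s^∞ e^{−t²/2} dt. -/

import Mathlib

open MeasureTheory

/-- The standard Gaussian tail function. -/
noncomputable def gaussQ (s : ℝ) : ℝ :=
  (Real.sqrt (2 * Real.pi))⁻¹ * ∫ t in Set.Ioi s, Real.exp (-t ^ 2 / 2)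

lemma aux_min_exp {k : ℝ} (hk : 0 < k) {h : ℝ} (hh : 0 ≤ h) (t : ℝ) :
    min (Real.exp (-(t + h) ^ 2 / k)) (Real.exp (-(t - h) ^ 2 / k)) =
      Real.exp (-(|t| + h) ^ 2 / k) := by
  rcases abs_cases t with ⟨ht, ht0⟩ | ⟨ht, ht0⟩
  · rw [ht]
    refine min_eq_left (Real.exp_le_exp.2 (div_le_div_of_nonneg_right ?_ hk.le))
    nlinarith
  · rw [ht]
    have he : (-t + h) ^ 2 = (t - h) ^ 2 := by ring
    rw [he]
    refine min_eq_right (Real.exp_le_exp.2 (div_le_div_of_nonneg_right ?_ hk.le))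
    nlinarith

lemma aux_Ioi_add (g : ℝ → ℝ) (a h : ℝ) :
    ∫ x in Set.Ioi a, g (x + h) = ∫ x in Set.Ioi (a + h), g x := by
  rw [← Set.image_add_const_Ioi,
    (measurePreserving_add_right volume h).setIntegral_image_emb
      (measurableEmbedding_addRight h) g (Set.Ioi a)]

lemma aux_A {σ : ℝ} (hσ : 0 < σ) :
    (2 * Real.pi * σ ^ 2) ^ (-(1:ℝ)/2) = (Real.sqrt (2 * Real.pi) * σ)⁻¹ := by
  have h2πσ : (0:ℝ) < 2 * Real.pi * σ ^ 2 := by positivity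
  rw [neg_div, Real.rpow_neg h2πσ.le, ← Real.sqrt_eq_rpow]
  congr 1
  rw [Real.sqrt_mul (show (0:ℝ) ≤ 2 * Real.pi by positivity) (σ ^ 2), Real.sqrt_sq hσ.le]

lemma aux_gauss_total {σ : ℝ} (hσ : 0 < σ) :
    ∫ t : ℝ, (2 * Real.pi * σ ^ 2) ^ (-(1:ℝ)/2) * Real.exp (-t ^ 2 / (2 * σ ^ 2)) = 1 := by
  rw [integral_const_mul]
  have h1 : ∀ t : ℝ, -t ^ 2 / (2 * σ ^ 2) = -(2 * σ ^ 2)⁻¹ * t ^ 2 := by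
    intro t; field_simp
  simp_rw [h1, integral_gaussian]
  rw [aux_A hσ]
  have h2 : Real.pi / (2 * σ ^ 2)⁻¹ = 2 * Real.pi * σ ^ 2 := by field_simp
  rw [h2, Real.sqrt_mul (show (0:ℝ) ≤ 2 * Real.pi by positivity) (σ ^ 2), Real.sqrt_sq hσ.le]
  field_simp

lemma aux_f0 {σ : ℝ} (hσ : 0 < σ) {h : ℝ} (hh : 0 ≤ h) :
    ∫ t : ℝ, (2 * Real.pi * σ ^ 2) ^ (-(1:ℝ)/2) * Real.exp (-(|t| + h) ^ 2 / (2 * σ ^ 2)) =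
      2 * gaussQ (h / σ) := by
  rw [integral_const_mul,
    integral_comp_abs (f := fun t => Real.exp (-(t + h) ^ 2 / (2 * σ ^ 2))),
    aux_Ioi_add (fun s => Real.exp (-s ^ 2 / (2 * σ ^ 2))) 0 h, zero_add]
  have h1 : ∀ s : ℝ, Real.exp (-s ^ 2 / (2 * σ ^ 2)) = Real.exp (-(σ⁻¹ * s) ^ 2 / 2) := by
    intro s
    congr 1
    rw [mul_pow, inv_pow, div_eq_div_iff (by positivity) (by norm_num)]
    field_simp
  simp_rw [h1]
  rw [integral_comp_mul_left_Ioi (fun u => Real.exp (-u ^ 2 / 2)) h (inv_pos.2 hσ),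
    aux_A hσ, gaussQ, inv_inv, smul_eq_mul]
  have hs : Real.sqrt (2 * Real.pi) ≠ 0 := by positivity
  field_simp

lemma aux_basis (n : ℕ) [NeZero n] (d : EuclideanSpace ℝ (Fin n)) :
    ∃ b : OrthonormalBasis (Fin n) ℝ (EuclideanSpace ℝ (Fin n)), d = ‖d‖ • b 0 := by
  by_cases hd : d = 0
  · exact ⟨EuclideanSpace.basisFun (Fin n) ℝ, by simp [hd]⟩
  · have hcard : Module.finrank ℝ (EuclideanSpace ℝ (Fin n)) = Fintype.card (Fin n) :=
      finrank_euclideanSpace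
    have hdn : ‖d‖ ≠ 0 := norm_ne_zero_iff.2 hd
    have hu : Orthonormal ℝ (({0} : Set (Fin n)).restrict (fun _ : Fin n => ‖d‖⁻¹ • d)) := by
      constructor
      · intro i
        show ‖‖d‖⁻¹ • d‖ = 1
        rw [norm_smul, norm_inv, norm_norm, inv_mul_cancel₀ hdn]
      · intro i j hij
        exact absurd (Subtype.ext (i.2.trans j.2.symm)) hij
    obtain ⟨b, hb⟩ := hu.exists_orthonormalBasis_extension_of_card_eq hcard
    refine ⟨b, ?_⟩
    rw [hb 0 rfl, smul_smul, mul_inv_cancel₀ hdn, one_smul]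

set_option maxHeartbeats 2000000 in
/-- the integral of the pointwise minimum of two isotropic Gaussian
densities with means `μ₀, μ₁` and variance `σ²` equals `2·Q(‖μ₁-μ₀‖/(2σ))`. -/
theorem integral_min_gaussians (n : ℕ) (hn : 1 ≤ n) (σ : ℝ) (hσ : 0 < σ)
    (μ0 μ1 : EuclideanSpace ℝ (Fin n)) :
    (∫ y : EuclideanSpace ℝ (Fin n),
        min ((2 * Real.pi * σ ^ 2) ^ (-(n : ℝ) / 2) * Real.exp (-‖y - μ0‖ ^ 2 / (2 * σ ^ 2)))
            ((2 * Real.pi * σ ^ 2) ^ (-(n : ℝ) / 2) * Real.exp (-‖y - μ1‖ ^ 2 / (2 * σ ^ 2)))) =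
      2 * gaussQ (‖μ1 - μ0‖ / (2 * σ)) := by
  haveI : NeZero n := ⟨by omega⟩
  have h2πσ : (0:ℝ) < 2 * Real.pi * σ ^ 2 := by positivity
  have h2σ : (0:ℝ) < 2 * σ ^ 2 := by positivity
  obtain ⟨b, hb⟩ := aux_basis n (μ1 - μ0)
  set c : ℝ := ‖μ1 - μ0‖ with hcdef
  set A : ℝ := (2 * Real.pi * σ ^ 2) ^ (-(1:ℝ)/2) with hAdef
  have hA0 : 0 ≤ A := Real.rpow_nonneg h2πσ.le _
  set h : ℝ := c / 2 with hhdef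
  have hh0 : 0 ≤ h := by rw [hhdef]; positivity
  set f : Fin n → ℝ → ℝ := fun i t =>
    if i = 0 then A * Real.exp (-(|t| + h) ^ 2 / (2 * σ ^ 2))
    else A * Real.exp (-t ^ 2 / (2 * σ ^ 2)) with hfdef
  set m : EuclideanSpace ℝ (Fin n) := μ0 + (2⁻¹ : ℝ) • (μ1 - μ0) with hmdef
  have hm0 : m - μ0 = h • b 0 := by
    rw [hmdef, add_sub_cancel_left, hb, smul_smul]
    congr 1
    rw [hhdef]; ring
  have hm1 : m - μ1 = -(h • b 0) := by
    have h1 : m - μ1 = (2⁻¹ : ℝ) • (μ1 - μ0) - (μ1 - μ0) := by rw [hmdef]; abel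
    rw [h1, hb, smul_smul, ← sub_smul, ← neg_smul]
    congr 1
    rw [hhdef]; ring
  -- the single 0 1 vector
  set e₀ : EuclideanSpace ℝ (Fin n) := EuclideanSpace.single (0 : Fin n) (1 : ℝ) with he₀def
  have prodify : ∀ w : Fin n → ℝ,
      (2 * Real.pi * σ ^ 2) ^ (-(n : ℝ) / 2) * Real.exp (-(∑ i, (w i) ^ 2) / (2 * σ ^ 2))
        = ∏ i, A * Real.exp (-(w i) ^ 2 / (2 * σ ^ 2)) := by
    intro w
    rw [Finset.prod_mul_distrib, Finset.prod_const, Finset.card_univ, Fintype.card_fin]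
    have hC : (2 * Real.pi * σ ^ 2) ^ (-(n : ℝ) / 2) = A ^ n := by
      rw [hAdef, ← Real.rpow_natCast ((2 * Real.pi * σ ^ 2) ^ (-(1:ℝ)/2)) n,
        ← Real.rpow_mul h2πσ.le]
      congr 1
      push_cast; ring
    rw [hC]
    congr 1
    rw [← Real.exp_sum]
    congr 1
    rw [← Finset.sum_div, Finset.sum_neg_distrib, neg_div]
  have nsq : ∀ w : EuclideanSpace ℝ (Fin n), ‖w‖ ^ 2 = ∑ i, (w i) ^ 2 := by
    intro w
    rw [EuclideanSpace.norm_eq, Real.sq_sqrt (by positivity)]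
    simp [Real.norm_eq_abs, sq_abs]
  have key : ∀ z : EuclideanSpace ℝ (Fin n),
      min ((2 * Real.pi * σ ^ 2) ^ (-(n : ℝ) / 2) * Real.exp (-‖z + h • e₀‖ ^ 2 / (2 * σ ^ 2)))
          ((2 * Real.pi * σ ^ 2) ^ (-(n : ℝ) / 2) * Real.exp (-‖z - h • e₀‖ ^ 2 / (2 * σ ^ 2)))
        = ∏ i, f i (z i) := by
    intro z
    have hp : ∀ i : Fin n, (z + h • e₀) i = z i + (if i = 0 then h else 0) := by
      intro i
      simp [he₀def, EuclideanSpace.single_apply, mul_ite]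
    have hq : ∀ i : Fin n, (z - h • e₀) i = z i - (if i = 0 then h else 0) := by
      intro i
      simp [he₀def, EuclideanSpace.single_apply, mul_ite]
    have e1 : ∑ i, ((z + h • e₀) i) ^ 2 = ∑ i, (z i + (if i = 0 then h else 0)) ^ 2 :=
      Finset.sum_congr rfl fun i _ => by rw [hp i]
    have e2 : ∑ i, ((z - h • e₀) i) ^ 2 = ∑ i, (z i - (if i = 0 then h else 0)) ^ 2 :=
      Finset.sum_congr rfl fun i _ => by rw [hq i]
    rw [nsq, nsq, e1, e2,
      prodify (fun i => z i + (if i = 0 then h else 0)),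
      prodify (fun i => z i - (if i = 0 then h else 0)),
      ← Finset.mul_prod_erase Finset.univ _ (Finset.mem_univ (0 : Fin n)),
      ← Finset.mul_prod_erase Finset.univ _ (Finset.mem_univ (0 : Fin n)),
      ← Finset.mul_prod_erase Finset.univ (fun i => f i (z i)) (Finset.mem_univ (0 : Fin n))]
    have hP1 : ∀ i ∈ Finset.univ.erase (0 : Fin n),
        A * Real.exp (-(z i + (if i = 0 then h else 0)) ^ 2 / (2 * σ ^ 2))
          = A * Real.exp (-(z i) ^ 2 / (2 * σ ^ 2)) := by
      intro i hi
      rw [if_neg (Finset.ne_of_mem_erase hi), add_zero]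
    have hP2 : ∀ i ∈ Finset.univ.erase (0 : Fin n),
        A * Real.exp (-(z i - (if i = 0 then h else 0)) ^ 2 / (2 * σ ^ 2))
          = A * Real.exp (-(z i) ^ 2 / (2 * σ ^ 2)) := by
      intro i hi
      rw [if_neg (Finset.ne_of_mem_erase hi), sub_zero]
    have hP3 : ∀ i ∈ Finset.univ.erase (0 : Fin n),
        f i (z i) = A * Real.exp (-(z i) ^ 2 / (2 * σ ^ 2)) := by
      intro i hi
      rw [hfdef]
      simp only [if_neg (Finset.ne_of_mem_erase hi)]
    rw [Finset.prod_congr rfl hP1, Finset.prod_congr rfl hP2, Finset.prod_congr rfl hP3]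
    have hPnn : 0 ≤ ∏ i ∈ Finset.univ.erase (0 : Fin n), A * Real.exp (-(z i) ^ 2 / (2 * σ ^ 2)) :=
      Finset.prod_nonneg fun i _ => mul_nonneg hA0 (Real.exp_nonneg _)
    rw [← min_mul_of_nonneg _ _ hPnn]
    congr 1
    rw [← mul_min_of_nonneg _ _ hA0, hfdef]
    simp only [reduceIte]
    exact congrArg (fun r => A * r) (aux_min_exp h2σ hh0 (z 0))
  calc (∫ y : EuclideanSpace ℝ (Fin n),
        min ((2 * Real.pi * σ ^ 2) ^ (-(n : ℝ) / 2) * Real.exp (-‖y - μ0‖ ^ 2 / (2 * σ ^ 2)))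
            ((2 * Real.pi * σ ^ 2) ^ (-(n : ℝ) / 2) * Real.exp (-‖y - μ1‖ ^ 2 / (2 * σ ^ 2))))
      = ∫ x : EuclideanSpace ℝ (Fin n),
          min ((2 * Real.pi * σ ^ 2) ^ (-(n : ℝ) / 2) * Real.exp (-‖x + h • b 0‖ ^ 2 / (2 * σ ^ 2)))
              ((2 * Real.pi * σ ^ 2) ^ (-(n : ℝ) / 2) * Real.exp (-‖x - h • b 0‖ ^ 2 / (2 * σ ^ 2))) := by
        rw [← integral_add_right_eq_self (fun y : EuclideanSpace ℝ (Fin n) =>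
          min ((2 * Real.pi * σ ^ 2) ^ (-(n : ℝ) / 2) * Real.exp (-‖y - μ0‖ ^ 2 / (2 * σ ^ 2)))
              ((2 * Real.pi * σ ^ 2) ^ (-(n : ℝ) / 2) * Real.exp (-‖y - μ1‖ ^ 2 / (2 * σ ^ 2)))) m]
        congr 1
        funext x
        rw [add_sub_assoc, hm0, add_sub_assoc, hm1, ← sub_eq_add_neg]
    _ = ∫ z : EuclideanSpace ℝ (Fin n),
          min ((2 * Real.pi * σ ^ 2) ^ (-(n : ℝ) / 2) * Real.exp (-‖z + h • e₀‖ ^ 2 / (2 * σ ^ 2)))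
              ((2 * Real.pi * σ ^ 2) ^ (-(n : ℝ) / 2) * Real.exp (-‖z - h • e₀‖ ^ 2 / (2 * σ ^ 2))) := by
        rw [← (b.measurePreserving_repr_symm).integral_comp
          (b.repr.symm.toHomeomorph.measurableEmbedding)
          (fun x : EuclideanSpace ℝ (Fin n) =>
            min ((2 * Real.pi * σ ^ 2) ^ (-(n : ℝ) / 2) * Real.exp (-‖x + h • b 0‖ ^ 2 / (2 * σ ^ 2)))
                ((2 * Real.pi * σ ^ 2) ^ (-(n : ℝ) / 2) * Real.exp (-‖x - h • b 0‖ ^ 2 / (2 * σ ^ 2))))]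
        congr 1
        funext z
        have k1 : ‖b.repr.symm z + h • b 0‖ = ‖z + h • e₀‖ := by
          rw [← b.repr.norm_map (b.repr.symm z + h • b 0), map_add,
            LinearIsometryEquiv.apply_symm_apply, _root_.map_smul, b.repr_self, he₀def]
        have k2 : ‖b.repr.symm z - h • b 0‖ = ‖z - h • e₀‖ := by
          rw [← b.repr.norm_map (b.repr.symm z - h • b 0), map_sub,
            LinearIsometryEquiv.apply_symm_apply, _root_.map_smul, b.repr_self, he₀def]
        rw [k1, k2]
    _ = ∫ z : EuclideanSpace ℝ (Fin n), ∏ i, f i (z i) := by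
        congr 1
        funext z
        exact key z
    _ = ∫ x : Fin n → ℝ, ∏ i, f i (x i) :=
        (MeasurePreserving.integral_comp'
          (MeasurePreserving.symm _ (EuclideanSpace.volume_preserving_symm_measurableEquiv_toLp (Fin n)))
          (fun z : EuclideanSpace ℝ (Fin n) => ∏ i, f i (z i))).symm
    _ = ∏ i, ∫ t : ℝ, f i t := MeasureTheory.integral_fintype_prod_eq_prod (f := f)
    _ = ∫ t : ℝ, f 0 t := by
        refine Finset.prod_eq_single_of_mem 0 (Finset.mem_univ 0) fun i _ hi => ?_
        rw [hfdef]
        simp only [if_neg hi]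
        rw [hAdef]
        exact aux_gauss_total hσ
    _ = 2 * gaussQ (h / σ) := by
        rw [hfdef]
        simp only [reduceIte]
        rw [hAdef]
        exact aux_f0 hσ hh0
    _ = 2 * gaussQ (c / (2 * σ)) := by rw [hhdef, div_div]
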